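/- The language L₂ = { w · (wᴿ)ₓ₃ · (w)ₓ₁₅ · (wᴿ)ₓ₅ : w a nonempty string over {1,2} } over the alphabet Σ = {1,2,3,6,5,10,15,30} does not belong to (CFL/n)_serial; that is, there is no alphabet Γ₀, no function g : ℕ → Γ₀* with |g(n)| = n for all n, and no context-free language L'' over Γ₀ ⊕ Σ such that for every string x over Σ, x ∈ L₂ if and only if g(|x|) · x ∈ L''. -/

import Mathlib

/-!
Suppose a grammar `G` generates `L''` and fix `m` large. For each of the `2 ^ m` words
`w ∈ {1, 2}ᵐ`, `G` generates the advice `g (4 m)` followed by `nest w`, a string of length `8 m`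
whose last `4 m` letters form four blocks of length `m`, each of which determines `w`. Go down
its derivation tree to a lowest node whose yield contains a whole block. A run of consecutive
children of that node covers the block while starting and ending inside the neighbouring blocks,
so its yield misses some other block. The run is described by a factor `β` of a right-hand side
and the endpoints of its yield: fewer than `2 ^ m` possibilities. So two words `w ≠ w'` give the
same description, and grafting the run of `w'` into the tree of `w` yields `g (4 m)` followed by a
string `v` that must lie in `L₂`. But `v` agrees with `nest w'` on one block and with `nest w`
on another, hence `w' = w`.
-/

/-- Multiply every symbol (a natural number) of the string `u` by `c`. -/
def mulStr (c : ℕ) (u : List ℕ) : List ℕ := u.map (c * ·)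

/-- The eight-symbol alphabet Σ = {1,2,3,6,5,10,15,30}. -/
def Sigma8 : Set ℕ := {1, 2, 3, 6, 5, 10, 15, 30}

/-- The nested palindrome `w (wᴿ)ₓ₃ (w)ₓ₁₅ (wᴿ)ₓ₅`. -/
def nest (w : List ℕ) : List ℕ :=
  w ++ mulStr 3 w.reverse ++ mulStr 15 w ++ mulStr 5 w.reverse

/-- The test language L₂. -/
def L2 : Language ℕ :=
  {s | ∃ w : List ℕ, w ≠ [] ∧ (∀ a ∈ w, a = 1 ∨ a = 2) ∧ s = nest w}

/-- `L` is CFL-immune: `L` is infinite and no infinite subset of `L` is context-free. -/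
def CFLImmune {T : Type} (L : Language T) : Prop :=
  Set.Infinite (L : Set (List T)) ∧
    ∀ M : Language T, M ≤ L → Set.Infinite (M : Set (List T)) → ¬ M.IsContextFree

/-- `L`, a language over the (sub)alphabet `A ⊆ ℕ`, belongs to CFL/n with parallel
(length-respecting) advice: there are an alphabet `Γ`, an advice `h` with `|h n| = n`,
and a context-free `L'` over the product alphabet such that for every string `x` over `A`,
`x ∈ L` iff the componentwise pairing of `x` with `h |x|` is in `L'`. -/
def InCFLAdviceParallel (A : Set ℕ) (L : Language ℕ) : Prop :=
  ∃ (Γ : Type) (_ : Fintype Γ) (h : ℕ → List Γ) (L' : Language (ℕ × Γ)),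
    (∀ n, (h n).length = n) ∧ L'.IsContextFree ∧
    ∀ x : List ℕ, (∀ a ∈ x, a ∈ A) → (x ∈ L ↔ x.zip (h x.length) ∈ L')

/-- `L`, a language over the (sub)alphabet `A ⊆ ℕ`, belongs to (CFL/n)_serial
(Damm–Holzer style serial advice): there are an alphabet `Γ₀`, an advice `g` with
`|g n| = n`, and a context-free `L''` over the disjoint-union alphabet `Γ₀ ⊕ ℕ` such
that for every string `x` over `A`, `x ∈ L` iff `g |x| · x ∈ L''`. -/
def InCFLAdviceSerial (A : Set ℕ) (L : Language ℕ) : Prop :=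
  ∃ (Γ₀ : Type) (_ : Fintype Γ₀) (g : ℕ → List Γ₀) (L'' : Language (Γ₀ ⊕ ℕ)),
    (∀ n, (g n).length = n) ∧ L''.IsContextFree ∧
    ∀ x : List ℕ, (∀ a ∈ x, a ∈ A) →
      (x ∈ L ↔ (g x.length).map Sum.inl ++ x.map Sum.inr ∈ L'')

/-- The language L₂,₁. -/
def L21 : Language ℕ :=
  {s | ∃ w x : List ℕ, w ≠ [] ∧ (∀ a ∈ w, a = 1 ∨ a = 2) ∧
    x ≠ [] ∧ (∀ a ∈ x, a = 5 ∨ a = 10 ∨ a = 15 ∨ a = 30) ∧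
    s = w ++ mulStr 3 w.reverse ++ x}

/-- The language L₂,₂. -/
def L22 : Language ℕ :=
  {s | ∃ y : List ℕ, y ≠ [] ∧ (∀ a ∈ y, a = 1 ∨ a = 2 ∨ a = 3 ∨ a = 6) ∧
    s = y ++ mulStr 5 y.reverse}

-- Block `j < k` is the interval `[o + j * m, o + j * m + m)`; `a` and `b` delimit `[a, b)`.
def CoversBlock (o m k a b : ℕ) : Prop := ∃ j < k, a ≤ o + j * m ∧ o + j * m + m ≤ b

def MissesBlock (o m k a b : ℕ) : Prop := ∃ j < k, o + j * m + m ≤ a ∨ b ≤ o + j * m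

theorem CoversBlock.shift {o m k a b : ℕ} (h : CoversBlock o m k a b) :
    CoversBlock 0 m k (a - o) (b - o) := by
  obtain ⟨j, hj, h₁, h₂⟩ := h
  exact ⟨j, hj, by omega, by omega⟩

theorem MissesBlock.shift {o m k a b : ℕ} (h : MissesBlock o m k a b) :
    MissesBlock 0 m k (a - o) (b - o) := by
  obtain ⟨j, hj, h⟩ := h
  exact ⟨j, hj, by omega⟩

namespace List

variable {α β : Type*}

theorem sum_take_mono (ls : List ℕ) {i j : ℕ} (h : i ≤ j) :
    (ls.take i).sum ≤ (ls.take j).sum :=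
  (List.take_prefix_take_left h).sublist.sum_le_sum fun _ _ => Nat.zero_le _

theorem exists_sum_take_le_lt (ls : List ℕ) {c : ℕ} (hc : c < ls.sum) :
    ∃ i < ls.length, (ls.take i).sum ≤ c ∧ c < (ls.take (i + 1)).sum := by
  induction ls generalizing c with
  | nil => simp at hc
  | cons x ls ih =>
    by_cases hx : c < x
    · exact ⟨0, by simp, by simp, by simpa using hx⟩
    · obtain ⟨i, hi, h₁, h₂⟩ := ih (c := c - x) (by simp at hc; omega)
      exact ⟨i + 1, by simpa using hi, by simp; omega, by simp; omega⟩

def splice (x y : List α) (a b : ℕ) : List α := x.take a ++ (y.drop a).take (b - a) ++ x.drop b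

theorem map_splice (f : α → β) (x y : List α) (a b : ℕ) :
    (splice x y a b).map f = splice (x.map f) (y.map f) a b := by
  simp [splice, map_take, map_drop]

theorem length_splice {x y : List α} (hxy : x.length = y.length) {a b : ℕ} (hab : a ≤ b) :
    (splice x y a b).length = x.length := by
  simp only [splice, length_append, length_take, length_drop]
  omega

theorem getElem_splice {x y : List α} (hxy : x.length = y.length) {a b : ℕ} (hab : a ≤ b) {i : ℕ}
    (hi : i < (splice x y a b).length) :
    (splice x y a b)[i] =
      if h : a ≤ i ∧ i < b then y[i]'(by rw [length_splice hxy hab] at hi; omega)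
      else x[i]'(by rw [length_splice hxy hab] at hi; omega) := by
  rw [length_splice hxy hab] at hi
  simp only [splice, getElem_append, getElem_take, getElem_drop, length_append, length_take,
    length_drop]
  split_ifs <;> first | omega | congr 1 <;> omega

theorem mem_splice {x y : List α} {a b : ℕ} {c : α} (h : c ∈ splice x y a b) : c ∈ x ∨ c ∈ y := by
  simp only [splice, mem_append] at h
  rcases h with (h | h) | h
  · exact .inl (mem_of_mem_take h)
  · exact .inr (mem_of_mem_drop (mem_of_mem_take h))
  · exact .inl (mem_of_mem_drop h)

theorem splice_append_append {l x y : List α} {a b : ℕ} (hl : l.length ≤ b) :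
    splice (l ++ x) (l ++ y) a b = l ++ splice x y (a - l.length) (b - l.length) := by
  rcases le_total a l.length with ha | ha
  · have hb : b - a - (l.length - a) = b - l.length := by omega
    simp [splice, take_append, drop_append, Nat.sub_eq_zero_of_le ha, drop_eq_nil_of_le hl,
      take_of_length_le (show (l.drop a).length ≤ b - a by simp; omega), hb, ← append_assoc]
  · have hb : b - l.length - (a - l.length) = b - a := by omega
    simp [splice, take_append, drop_append, take_of_length_le ha, drop_eq_nil_of_le ha,
      drop_eq_nil_of_le hl, hb]

theorem drop_take_splice_of_le {x y : List α} (hxy : x.length = y.length) {a b c m : ℕ}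
    (hac : a ≤ c) (hcb : c + m ≤ b) :
    ((splice x y a b).drop c).take m = (y.drop c).take m := by
  apply ext_getElem
  · simp [length_splice hxy (by omega : a ≤ b), hxy]
  · intro i h₁ h₂
    simp only [getElem_take, getElem_drop]
    rw [getElem_splice hxy (by omega)]
    rw [length_take, length_drop] at h₂
    rw [dif_pos (by omega)]

theorem drop_take_splice_of_disjoint {x y : List α} (hxy : x.length = y.length) {a b c m : ℕ}
    (hab : a ≤ b) (hc : c + m ≤ a ∨ b ≤ c) :
    ((splice x y a b).drop c).take m = (x.drop c).take m := by
  apply ext_getElem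
  · simp [length_splice hxy hab]
  · intro i h₁ h₂
    simp only [getElem_take, getElem_drop]
    rw [getElem_splice hxy hab]
    rw [length_take, length_drop] at h₂
    rw [dif_neg (by omega)]

end List

/-- Take the first piece reaching into a covered block and the first one reaching its end. As
neither covers a block, the run between them lies within the block and its two neighbours, so it
misses one of at least four blocks. -/
theorem exists_span_coversBlock_missesBlock {ls : List ℕ} {s o m k : ℕ} (hm : 0 < m) (hk : 4 ≤ k)
    (hcov : CoversBlock o m k s (s + ls.sum))
    (hmin : ∀ i (hi : i < ls.length),
      ¬ CoversBlock o m k (s + (ls.take i).sum) (s + (ls.take i).sum + ls[i])) :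
    ∃ p q, p ≤ q ∧ q < ls.length ∧
      CoversBlock o m k (s + (ls.take p).sum) (s + (ls.take (q + 1)).sum) ∧
      MissesBlock o m k (s + (ls.take p).sum) (s + (ls.take (q + 1)).sum) := by
  obtain ⟨j, hj, hs, hjs⟩ := hcov
  obtain ⟨p, hp, hp₁, hp₂⟩ := ls.exists_sum_take_le_lt (c := o + j * m - s) (by omega)
  obtain ⟨q, hq, hq₁, hq₂⟩ := ls.exists_sum_take_le_lt (c := o + j * m + m - 1 - s) (by omega)
  have hpq : p ≤ q := by
    by_contra! h
    have := ls.sum_take_mono (show q + 1 ≤ p by omega)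
    omega
  refine ⟨p, q, hpq, hq, ⟨j, hj, by omega, by omega⟩, ?_⟩
  have hp_end := List.sum_take_succ ls p hp
  have hq_end := List.sum_take_succ ls q hq
  rcases lt_or_ge j 2 with hj2 | hj2
  · refine ⟨j + 2, by omega, .inr ?_⟩
    by_contra! h
    have e₁ : (j + 1) * m = j * m + m := by ring
    have e₂ : (j + 2) * m = j * m + m + m := by ring
    exact hmin q hq ⟨j + 1, by omega, by omega, by omega⟩
  · obtain ⟨i, rfl⟩ : ∃ i, j = i + 2 := ⟨j - 2, by omega⟩
    refine ⟨i, by omega, .inl ?_⟩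
    by_contra! h
    have e₁ : (i + 1) * m = i * m + m := by ring
    have e₂ : (i + 2) * m = i * m + m + m := by ring
    exact hmin p hp ⟨i + 1, by omega, by omega, by omega⟩

namespace ContextFreeRule

variable {T N : Type*} {r : ContextFreeRule T N}

theorem Rewrites.append_split {u v w : List (Symbol T N)} (h : r.Rewrites (u ++ v) w) :
    (∃ u', r.Rewrites u u' ∧ w = u' ++ v) ∨ ∃ v', r.Rewrites v v' ∧ w = u ++ v' := by
  induction u generalizing w with
  | nil => exact .inr ⟨w, h, rfl⟩
  | cons x u ih =>
    cases h with
    | head => exact .inl ⟨_, .head u, by simp⟩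
    | cons _ h =>
      rcases ih h with ⟨u', hu, rfl⟩ | ⟨v', hv, rfl⟩
      · exact .inl ⟨x :: u', hu.cons x, rfl⟩
      · exact .inr ⟨v', hv, rfl⟩

theorem not_rewrites_nil {w : List (Symbol T N)} : ¬ r.Rewrites [] w := nofun

theorem Rewrites.eq_of_singleton {X : Symbol T N} {w : List (Symbol T N)}
    (h : r.Rewrites [X] w) : X = .nonterminal r.input ∧ w = r.output := by
  cases h with
  | head => simp
  | cons _ h => exact absurd h not_rewrites_nil

end ContextFreeRule

namespace ContextFreeGrammar

variable {T : Type*} {g : ContextFreeGrammar T}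

inductive DerivesIn (g : ContextFreeGrammar T) :
    ℕ → List (Symbol T g.NT) → List (Symbol T g.NT) → Prop
  | refl (u : List (Symbol T g.NT)) : g.DerivesIn 0 u u
  | head {u v w : List (Symbol T g.NT)} {n : ℕ} :
      g.Produces u v → g.DerivesIn n v w → g.DerivesIn (n + 1) u w

namespace DerivesIn

theorem derives {n : ℕ} {u v : List (Symbol T g.NT)} (h : g.DerivesIn n u v) : g.Derives u v := by
  induction h with
  | refl => exact .refl _
  | head hp _ ih => exact hp.trans_derives ih

theorem tail {n : ℕ} {u v w : List (Symbol T g.NT)} (h : g.DerivesIn n u v) (hp : g.Produces v w) :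
    g.DerivesIn (n + 1) u w := by
  induction h with
  | refl => exact .head hp (.refl _)
  | head hp' _ ih => exact .head hp' (ih hp)

theorem append_split {n : ℕ} {u v w : List (Symbol T g.NT)} (h : g.DerivesIn n (u ++ v) w) :
    ∃ n₁ n₂ w₁ w₂, n₁ + n₂ = n ∧ w = w₁ ++ w₂ ∧ g.DerivesIn n₁ u w₁ ∧ g.DerivesIn n₂ v w₂ := by
  generalize huv : u ++ v = s at h
  induction h generalizing u v with
  | refl => exact ⟨0, 0, u, v, rfl, huv.symm, .refl _, .refl _⟩
  | head hp _ ih =>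
    subst huv
    obtain ⟨r, hr, hrw⟩ := hp
    rcases hrw.append_split with ⟨u', hu, rfl⟩ | ⟨v', hv, rfl⟩
    · obtain ⟨n₁, n₂, w₁, w₂, rfl, rfl, h₁, h₂⟩ := ih rfl
      exact ⟨n₁ + 1, n₂, w₁, w₂, by omega, rfl, .head ⟨r, hr, hu⟩ h₁, h₂⟩
    · obtain ⟨n₁, n₂, w₁, w₂, rfl, rfl, h₁, h₂⟩ := ih rfl
      exact ⟨n₁, n₂ + 1, w₁, w₂, by omega, rfl, h₁, .head ⟨r, hr, hv⟩ h₂⟩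

theorem eq_nil {n : ℕ} {w : List (Symbol T g.NT)} (h : g.DerivesIn n [] w) : w = [] := by
  cases h with
  | refl => rfl
  | head hp _ => exact absurd hp.choose_spec.2 ContextFreeRule.not_rewrites_nil

theorem exists_forall₂ {n : ℕ} {α w : List (Symbol T g.NT)} (h : g.DerivesIn n α w) :
    ∃ ws : List (List (Symbol T g.NT)), w = ws.flatten ∧
      List.Forall₂ (fun X y => ∃ k ≤ n, g.DerivesIn k [X] y) α ws := by
  induction α generalizing n w with
  | nil => exact ⟨[], by simp [h.eq_nil], .nil⟩
  | cons X α ih =>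
    obtain ⟨n₁, n₂, w₁, w₂, rfl, rfl, h₁, h₂⟩ := append_split (u := [X]) h
    obtain ⟨ws, rfl, hws⟩ := ih h₂
    refine ⟨w₁ :: ws, rfl, .cons ⟨n₁, by omega, h₁⟩ ?_⟩
    exact hws.imp fun {_ _} ⟨k, hk, hd⟩ => ⟨k, by omega, hd⟩

theorem eq_of_zero {X : Symbol T g.NT} {w : List (Symbol T g.NT)} (h : g.DerivesIn 0 [X] w) :
    w = [X] := by
  cases h; rfl

theorem exists_rule_of_succ {n : ℕ} {X : Symbol T g.NT} {w : List (Symbol T g.NT)}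
    (h : g.DerivesIn (n + 1) [X] w) :
    ∃ r ∈ g.rules, X = .nonterminal r.input ∧ g.DerivesIn n r.output w := by
  cases h with
  | head hp hd =>
    obtain ⟨r, hr, hrw⟩ := hp
    obtain ⟨rfl, rfl⟩ := hrw.eq_of_singleton
    exact ⟨r, hr, rfl, hd⟩

end DerivesIn

theorem derives_iff_exists_derivesIn {u v : List (Symbol T g.NT)} :
    g.Derives u v ↔ ∃ n, g.DerivesIn n u v := by
  refine ⟨fun h => ?_, fun ⟨_, h⟩ => h.derives⟩
  induction h with
  | refl => exact ⟨0, .refl _⟩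
  | tail _ hp ih =>
    obtain ⟨n, h⟩ := ih
    exact ⟨n + 1, h.tail hp⟩

theorem Derives.append {a a' b b' : List (Symbol T g.NT)} (ha : g.Derives a a')
    (hb : g.Derives b b') : g.Derives (a ++ b) (a' ++ b') :=
  (ha.append_right b).trans (hb.append_left a')

theorem derives_flatten {α : List (Symbol T g.NT)} {ws : List (List (Symbol T g.NT))}
    (h : List.Forall₂ (fun X y => g.Derives [X] y) α ws) : g.Derives α ws.flatten := by
  induction h with
  | nil => exact .refl _
  | cons hX _ ih => simpa using hX.append ih

/-- Descend into a child whose yield still satisfies `P`; as `P` needs yields of length at least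
two, the descent stops at a rule application, not at a leaf. -/
theorem DerivesIn.exists_minimal_node (P : ℕ → ℕ → Prop) (hP : ∀ s l, P s l → 2 ≤ l) {n : ℕ}
    {X : Symbol T g.NT} {z : List (Symbol T g.NT)} (h : g.DerivesIn n [X] z) {s : ℕ}
    (hz : P s z.length) :
    ∃ (z₁ z₃ : List (Symbol T g.NT)) (r : ContextFreeRule T g.NT)
      (ys : List (List (Symbol T g.NT))),
      r ∈ g.rules ∧ z = z₁ ++ ys.flatten ++ z₃ ∧
      g.Derives [X] (z₁ ++ [.nonterminal r.input] ++ z₃) ∧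
      List.Forall₂ (fun Y y => g.Derives [Y] y) r.output ys ∧
      P (s + z₁.length) ys.flatten.length ∧
      ∀ k (hk : k < ys.length), ¬ P (s + z₁.length + (ys.take k).flatten.length) ys[k].length := by
  induction n using Nat.strong_induction_on generalizing X z s with
  | _ n ih =>
  rcases n with _ | n
  · rw [h.eq_of_zero] at hz
    exact absurd (hP _ _ hz) (by simp)
  obtain ⟨r₀, hr₀, rfl, hd⟩ := h.exists_rule_of_succ
  obtain ⟨ws, rfl, hws⟩ := hd.exists_forall₂
  have hws' : List.Forall₂ (fun Y y => g.Derives [Y] y) r₀.output ws :=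
    hws.imp fun {_ _} ⟨_, _, h⟩ => h.derives
  by_cases hmin : ∃ k, ∃ hk : k < ws.length, P (s + (ws.take k).flatten.length) ws[k].length
  swap
  · push Not at hmin
    exact ⟨[], [], r₀, ws, hr₀, by simp, .refl _, hws', by simpa using hz, by simpa using hmin⟩
  obtain ⟨k, hk, hPk⟩ := hmin
  have hkout : k < r₀.output.length := hws.length_eq ▸ hk
  obtain ⟨n', hn', hdk⟩ := (List.forall₂_iff_get.mp hws).2 k hkout hk
  simp only [List.get_eq_getElem] at hdk
  obtain ⟨z₁, z₃, r, ys, hr, hsplit, hctx, hys, hnode, hchild⟩ := ih n' (by omega) hdk hPk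
  have hws_split : ws.take k ++ ws[k] :: ws.drop (k + 1) = ws := by
    rw [List.getElem_cons_drop, List.take_append_drop]
  have hout_split : r₀.output.take k ++ r₀.output[k] :: r₀.output.drop (k + 1) = r₀.output := by
    rw [List.getElem_cons_drop, List.take_append_drop]
  refine ⟨(ws.take k).flatten ++ z₁, z₃ ++ (ws.drop (k + 1)).flatten, r, ys, hr, ?_, ?_, hys, ?_,
    ?_⟩
  · conv_lhs => rw [← hws_split]
    simp [hsplit]
  · have hroot : g.Derives [.nonterminal r₀.input] r₀.output :=
      .single ⟨r₀, hr₀, by simpa using ContextFreeRule.rewrites_of_exists_parts r₀ [] []⟩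
    refine hroot.trans ?_
    rw [← hout_split]
    simpa using ((derives_flatten (List.forall₂_take k hws')).append hctx).append
      (derives_flatten (List.forall₂_drop (k + 1) hws'))
  · simpa [add_assoc] using hnode
  · intro i hi
    simpa [add_assoc] using hchild i hi

/-- A derivation of `z` from `X` passes through a form `u ++ β ++ v` in which `β` yields
exactly the factor `z[a, b)`. -/
def IsCut (g : ContextFreeGrammar T) (X : Symbol T g.NT) (β z : List (Symbol T g.NT))
    (a b : ℕ) : Prop :=
  ∃ u v, g.Derives [X] (u ++ β ++ v) ∧ g.Derives u (z.take a) ∧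
    g.Derives β ((z.drop a).take (b - a)) ∧ g.Derives v (z.drop b)

theorem IsCut.of_append {X : Symbol T g.NT} {u β v x₁ x₂ x₃ : List (Symbol T g.NT)}
    (h : g.Derives [X] (u ++ β ++ v)) (hu : g.Derives u x₁) (hβ : g.Derives β x₂)
    (hv : g.Derives v x₃) : g.IsCut X β (x₁ ++ x₂ ++ x₃) x₁.length (x₁.length + x₂.length) :=
  ⟨u, v, h, by simpa using hu, by simpa using hβ, by simpa using hv⟩

theorem IsCut.derives_splice {X : Symbol T g.NT} {β x y : List (Symbol T g.NT)} {a b : ℕ}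
    (hx : g.IsCut X β x a b) (hy : g.IsCut X β y a b) : g.Derives [X] (x.splice y a b) := by
  obtain ⟨u, v, h, hu, -, hv⟩ := hx
  obtain ⟨-, -, -, -, hβ, -⟩ := hy
  exact h.trans ((hu.append hβ).append hv)

theorem isCut_of_forall₂ {X : Symbol T g.NT} {z₁ z₃ : List (Symbol T g.NT)}
    {r : ContextFreeRule T g.NT} {ys : List (List (Symbol T g.NT))} (hr : r ∈ g.rules)
    (hctx : g.Derives [X] (z₁ ++ [.nonterminal r.input] ++ z₃))
    (hys : List.Forall₂ (fun Y y => g.Derives [Y] y) r.output ys) (p t : ℕ) :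
    g.IsCut X ((r.output.drop p).take t) (z₁ ++ ys.flatten ++ z₃)
      (z₁.length + (ys.take p).flatten.length) (z₁.length + (ys.take (p + t)).flatten.length) := by
  have split3 : ∀ {α : Type _} (l : List α), l.take p ++ (l.drop p).take t ++ l.drop (p + t) = l :=
    fun l => by rw [← List.take_add, List.take_append_drop]
  have hroot : g.Derives [X] ((z₁ ++ r.output.take p) ++ (r.output.drop p).take t ++
      (r.output.drop (p + t) ++ z₃)) := by
    refine hctx.trans_produces ⟨r, hr, ?_⟩
    convert ContextFreeRule.rewrites_of_exists_parts r z₁ z₃ using 1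
    simp only [List.append_assoc, List.append_cancel_left_eq]
    rw [← List.append_assoc, ← List.append_assoc, split3]
  have hu : g.Derives (z₁ ++ r.output.take p) (z₁ ++ (ys.take p).flatten) :=
    (derives_flatten (List.forall₂_take p hys)).append_left z₁
  have hβ : g.Derives ((r.output.drop p).take t) ((ys.drop p).take t).flatten :=
    derives_flatten (List.forall₂_take t (List.forall₂_drop p hys))
  have hv : g.Derives (r.output.drop (p + t) ++ z₃) ((ys.drop (p + t)).flatten ++ z₃) :=
    (derives_flatten (List.forall₂_drop (p + t) hys)).append_right z₃
  have hz : z₁ ++ ys.flatten ++ z₃ = (z₁ ++ (ys.take p).flatten) ++ ((ys.drop p).take t).flatten ++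
      ((ys.drop (p + t)).flatten ++ z₃) := by
    conv_lhs => rw [← split3 ys]
    simp only [List.flatten_append, List.append_assoc]
  have hb : (ys.take (p + t)).flatten.length =
      (ys.take p).flatten.length + ((ys.drop p).take t).flatten.length := by
    simp [List.take_add]
  have := IsCut.of_append hroot hu hβ hv
  rwa [List.length_append, add_assoc, ← hb, ← hz] at this

open Classical in
noncomputable def outputSublists (g : ContextFreeGrammar T) : Finset (List (Symbol T g.NT)) :=
  g.rules.biUnion fun r => r.output.sublists.toFinset

theorem mem_outputSublists {β : List (Symbol T g.NT)} {r : ContextFreeRule T g.NT}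
    (hr : r ∈ g.rules) (hβ : β.Sublist r.output) : β ∈ g.outputSublists := by
  classical
  simp only [outputSublists, Finset.mem_biUnion, List.mem_toFinset, List.mem_sublists]
  exact ⟨r, hr, hβ⟩

theorem Derives.exists_isCut {X : Symbol T g.NT} {z : List (Symbol T g.NT)} (h : g.Derives [X] z)
    {o m k : ℕ} (hm : 2 ≤ m) (hk : 4 ≤ k) (hz : o + m ≤ z.length) :
    ∃ β ∈ g.outputSublists, ∃ a b, b ≤ z.length ∧ CoversBlock o m k a b ∧
      MissesBlock o m k a b ∧ g.IsCut X β z a b := by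
  obtain ⟨n, hn⟩ := derives_iff_exists_derivesIn.mp h
  have hroot : CoversBlock o m k 0 (0 + z.length) := ⟨0, by omega, by simp, by simpa using hz⟩
  obtain ⟨z₁, z₃, r, ys, hr, rfl, hctx, hys, hnode, hchild⟩ :=
    hn.exists_minimal_node (fun s l => CoversBlock o m k s (s + l))
      (by rintro s l ⟨j, -, h₁, h₂⟩; omega) hroot
  have hpre : ∀ i, (ys.take i).flatten.length = ((ys.map List.length).take i).sum := fun i => by
    simp [List.length_flatten, List.map_take]
  obtain ⟨p, q, hpq, hq, hcov, hmiss⟩ :=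
    exists_span_coversBlock_missesBlock (ls := ys.map List.length) (s := z₁.length) (o := o)
      (m := m) (by omega) hk (by simpa [List.length_flatten] using hnode)
      (fun i hi => by simpa [hpre] using hchild i (by simpa using hi))
  refine ⟨(r.output.drop p).take (q + 1 - p),
    mem_outputSublists hr ((List.take_sublist _ _).trans (List.drop_sublist _ _)), _, _, ?_, hcov,
    hmiss, ?_⟩
  · have := ((ys.map List.length).take_sublist (q + 1)).sum_le_sum fun _ _ => Nat.zero_le _
    simp only [List.length_append, List.length_flatten]
    omega
  · have := isCut_of_forall₂ hr hctx hys p (q + 1 - p)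
    rwa [Nat.add_sub_cancel' (by omega : p ≤ q + 1), hpre, hpre] at this

/-- Swapping lemma: a cut `(β, a, b)` of a word of length `N` takes at most
`|outputSublists| * (N + 1) ^ 2` values, so two of the words share one. -/
theorem exists_ne_splice_mem_language {ι : Type*} {s : Finset ι} {w : ι → List T} {N o m k : ℕ}
    (hm : 2 ≤ m) (hk : 4 ≤ k) (hN : o + m ≤ N)
    (hw : ∀ i ∈ s, w i ∈ g.language) (hlen : ∀ i ∈ s, (w i).length = N)
    (hs : g.outputSublists.card * (N + 1) ^ 2 < s.card) :
    ∃ i ∈ s, ∃ i' ∈ s, i ≠ i' ∧ ∃ a b, CoversBlock o m k a b ∧ MissesBlock o m k a b ∧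
      (w i).splice (w i') a b ∈ g.language := by
  classical
  have hcut : ∀ i ∈ s, ∃ β ∈ g.outputSublists, ∃ a b, b ≤ N ∧ CoversBlock o m k a b ∧
      MissesBlock o m k a b ∧ g.IsCut (.nonterminal g.initial) β ((w i).map .terminal) a b := by
    intro i hi
    simpa [hlen i hi] using
      ((mem_language_iff _ _).mp (hw i hi)).exists_isCut hm hk (by simpa [hlen i hi])
  choose! β hβ a b hb hcov hmiss hcutI using hcut
  obtain ⟨i, hi, i', hi', hne, heq⟩ := Finset.exists_ne_map_eq_of_card_lt_of_maps_to
    (t := g.outputSublists ×ˢ Finset.range (N + 1) ×ˢ Finset.range (N + 1))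
    (f := fun i => (β i, a i, b i)) (by simpa [sq, mul_assoc] using hs) fun i hi => by
      obtain ⟨j, -, hj, hj'⟩ := hcov i hi
      simp only [Finset.coe_product, Set.mem_prod, Finset.mem_coe, Finset.mem_range]
      exact ⟨hβ i hi, by have := hb i hi; omega, by have := hb i hi; omega⟩
  simp only [Prod.mk.injEq] at heq
  obtain ⟨hβi, hai, hbi⟩ := heq
  refine ⟨i, hi, i', hi', hne, a i, b i, hcov i hi, hmiss i hi, ?_⟩
  rw [mem_language_iff, List.map_splice]
  exact (hcutI i hi).derives_splice (by rw [hβi, hai, hbi]; exact hcutI i' hi')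

end ContextFreeGrammar

theorem length_nest (u : List ℕ) : (nest u).length = 4 * u.length := by
  simp [nest, mulStr]; ring

theorem mulStr_injective {c : ℕ} (hc : c ≠ 0) : Function.Injective (mulStr c) :=
  List.map_injective_iff.mpr (mul_right_injective₀ hc)

theorem eq_of_drop_take_nest_eq {m j : ℕ} {u u' : List ℕ} (hu : u.length = m) (hu' : u'.length = m)
    (hj : j < 4) (h : ((nest u).drop (j * m)).take m = ((nest u').drop (j * m)).take m) :
    u = u' := by
  have hblock : ∀ v : List ℕ, v.length = m → ((nest v).drop (j * m)).take m =
      [v, mulStr 3 v.reverse, mulStr 15 v, mulStr 5 v.reverse][j] := by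
    intro v rfl
    interval_cases j <;>
      simp [nest, mulStr, List.drop_append, List.take_of_length_le,
        List.drop_eq_nil_of_le, two_mul, show ∀ n : ℕ, 3 * n = n + n + n from fun n => by ring]
  rw [hblock u hu, hblock u' hu'] at h
  interval_cases j
  · exact h
  · exact List.reverse_injective (mulStr_injective (by norm_num) h)
  · exact mulStr_injective (by norm_num) h
  · exact List.reverse_injective (mulStr_injective (by norm_num) h)

theorem mem_Sigma8_of_mem_nest {u : List ℕ} (hu : ∀ a ∈ u, a = 1 ∨ a = 2) {a : ℕ}
    (ha : a ∈ nest u) : a ∈ Sigma8 := by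
  simp only [nest, mulStr, List.mem_append, List.mem_map, List.mem_reverse] at ha
  simp only [Sigma8, Set.mem_insert_iff, Set.mem_singleton_iff]
  rcases ha with ((ha | ⟨b, hb, rfl⟩) | ⟨b, hb, rfl⟩) | ⟨b, hb, rfl⟩ <;>
    first | rcases hu a ha with h | h <;> omega | rcases hu b hb with h | h <;> omega

theorem eq_of_splice_nest_mem_L2 {m : ℕ} {u u' : List ℕ} (hu : u.length = m)
    (hu' : u'.length = m) {a b : ℕ} (hcov : CoversBlock 0 m 4 a b) (hmiss : MissesBlock 0 m 4 a b)
    (h : (nest u).splice (nest u') a b ∈ L2) : u = u' := by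
  obtain ⟨v, -, -, hv⟩ := h
  obtain ⟨j, hj, hja, hjb⟩ := hcov
  obtain ⟨j', hj', hj'ab⟩ := hmiss
  have hlen : (nest u).length = (nest u').length := by simp [length_nest, hu, hu']
  have hab : a ≤ b := by omega
  have hvm : v.length = m := by
    have := congrArg List.length hv
    rw [List.length_splice hlen hab, length_nest, length_nest] at this
    omega
  have hv' : v = u' := eq_of_drop_take_nest_eq hvm hu' hj (by
    rw [← hv, List.drop_take_splice_of_le hlen (by simpa using hja) (by simpa using hjb)])
  have hv : v = u := eq_of_drop_take_nest_eq hvm hu hj' (by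
    rw [← hv, List.drop_take_splice_of_disjoint hlen hab (by simpa using hj'ab)])
  exact hv.symm.trans hv'

def wordOf {m : ℕ} (b : Fin m → Fin 2) : List ℕ := List.ofFn fun i => (b i : ℕ) + 1

theorem length_wordOf {m : ℕ} (b : Fin m → Fin 2) : (wordOf b).length = m := by simp [wordOf]

theorem mem_wordOf {m : ℕ} (b : Fin m → Fin 2) : ∀ a ∈ wordOf b, a = 1 ∨ a = 2 := by
  simp only [wordOf, List.mem_ofFn]
  rintro _ ⟨i, rfl⟩
  omega

theorem wordOf_injective (m : ℕ) : Function.Injective (wordOf (m := m)) := fun b b' h => by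
  funext i
  exact Fin.ext (by simpa using congrFun (List.ofFn_injective h) i)

theorem exists_mul_sq_lt_two_pow (K : ℕ) : ∃ m, 2 ≤ m ∧ K * (8 * m + 1) ^ 2 < 2 ^ m := by
  suffices h : ∀ t, K < t → 41 ≤ t → K * (8 * (5 * t) + 1) ^ 2 < 2 ^ (5 * t) from
    ⟨5 * (K + 41), by omega, h _ (by omega) (by omega)⟩
  intro t hK ht
  calc K * (8 * (5 * t) + 1) ^ 2 ≤ K * (t * t) ^ 2 := by gcongr; nlinarith
    _ < t * (t * t) ^ 2 := by gcongr
    _ = t ^ 5 := by ring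
    _ < (2 ^ t) ^ 5 := Nat.pow_lt_pow_left Nat.lt_two_pow_self (by norm_num)
    _ = 2 ^ (5 * t) := by rw [← pow_mul, mul_comm]

/-- L₂ does not belong to (CFL/n)_serial. -/
theorem L2_not_in_CFL_serial_advice : ¬ InCFLAdviceSerial Sigma8 L2 := by
  rintro ⟨Γ₀, _, adv, L'', hadv, ⟨G, rfl⟩, hL⟩
  obtain ⟨m, hm, hcard⟩ := exists_mul_sq_lt_two_pow G.outputSublists.card
  have hsig : ∀ b : Fin m → Fin 2, ∀ a ∈ nest (wordOf b), a ∈ Sigma8 :=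
    fun b _ => mem_Sigma8_of_mem_nest (mem_wordOf b)
  have hlen : ∀ b : Fin m → Fin 2, (nest (wordOf b)).length = 4 * m := by
    simp [length_nest, length_wordOf]
  have hmem : ∀ b : Fin m → Fin 2,
      (adv (4 * m)).map Sum.inl ++ (nest (wordOf b)).map Sum.inr ∈ G.language := fun b => by
    have hw : nest (wordOf b) ∈ L2 :=
      ⟨wordOf b, List.ne_nil_of_length_pos (by simp [length_wordOf]; omega), mem_wordOf b, rfl⟩
    simpa [hlen] using (hL _ (hsig b)).mp hw
  obtain ⟨b, -, b', -, hne, a, c, hcov, hmiss, hsplice⟩ :=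
    G.exists_ne_splice_mem_language (s := Finset.univ) (N := 8 * m) (o := 4 * m) hm le_rfl
      (by omega) (fun b _ => hmem b) (fun b _ => by simp [hadv, hlen]; omega)
      (by simpa using hcard)
  obtain ⟨j, -, hja, hjc⟩ := id hcov
  rw [List.splice_append_append (by simp [hadv]; omega), ← List.map_splice] at hsplice
  simp only [List.length_map, hadv] at hsplice
  set x := (nest (wordOf b)).splice (nest (wordOf b')) (a - 4 * m) (c - 4 * m)
  have hxlen : x.length = 4 * m := by
    rw [List.length_splice (by rw [hlen, hlen]) (by omega), hlen]
  have hx : x ∈ L2 :=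
    (hL x fun d hd => (List.mem_splice hd).elim (hsig b d) (hsig b' d)).mpr (by rwa [hxlen])
  exact hne (wordOf_injective m
    (eq_of_splice_nest_mem_L2 (length_wordOf b) (length_wordOf b') hcov.shift hmiss.shift hx))
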